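/- arXiv:2304.02393 — 2 statements merged into one kernel-verified Lean document; each statement's English description precedes it below -/
import Mathlib

section
/- Let G = (V, E) be a finite undirected simple graph on N vertices with Laplacian L := L(G), let p ∈ [0, 1], and let (α_e)_{e ∈ E} be mutually independent Bernoulli(p) {0,1}-random variables; define the random Laplacian L̃ := Σ_{e ∈ E} α_e · L_e with L_e the Laplacian of the single-edge graph. Let Q be a symmetric n×n real matrix and B^d, B^c, B^p ∈ ℝ^{n×m}. Then E[(I_N ⊗ B^d + L̃ ⊗ B^c + L ⊗ B^p)ᵀ (I_N ⊗ Q) (I_N ⊗ B^d + L̃ ⊗ B^c + L ⊗ B^p)] = (I_N ⊗ B^d + L ⊗ (p·B^c + B^p))ᵀ (I_N ⊗ Q) (I_N ⊗ B^d + L ⊗ (p·B^c + B^p)) + 2p(1−p) · L ⊗ (B^{cT} Q B^c), where ⊗ denotes the Kronecker product and E is the entrywise expectation. -/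
/-! Write the integrand as `X(ω)ᵀ C X(ω)` with `C = I ⊗ Q`, `X(ω) = M + Σ_e α_e(ω) K_e`,
`M = I ⊗ B^d + L ⊗ B^p` and `K_e = L_e ⊗ B^c`. This is a quadratic polynomial in the `α_e` with
constant matrix coefficients, so its expectation only sees the moments `E α_e = p` and
`E α_e α_f = p² + δ_{ef} p(1 - p)` (independence for `e ≠ f`, `α_e² = α_e` for `e = f`), which gives
`(M + p Σ_e K_e)ᵀ C (M + p Σ_e K_e) + p(1 - p) Σ_e K_eᵀ C K_e`. Finally `Σ_e L_e = L`, and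
`L_e = (𝟙_u - 𝟙_v)(𝟙_u - 𝟙_v)ᵀ` for `e = {u, v}` gives `L_eᵀ L_e = 2 L_e`, so that
`Σ_e K_eᵀ C K_e = 2 L ⊗ B^cᵀ Q B^c`. -/

open MeasureTheory ProbabilityTheory Matrix Kronecker

/-- The Laplacian of the graph on `V` containing the single undirected edge `e`: diagonal entries
are `1` at the two endpoints of `e` (provided `e` is not a loop), the off-diagonal entries
corresponding to `e` are `-1`, and all other entries vanish. -/
def edgeLaplacian {V : Type*} [DecidableEq V] (e : Sym2 V) : Matrix V V ℝ :=
  Matrix.of fun i j =>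
    if i = j then (if i ∈ e ∧ ¬e.IsDiag then 1 else 0)
    else (if s(i, j) = e then -1 else 0)

section MatrixAlgebra

variable {ι l m n p R : Type*} [CommSemiring R]

lemma sum_smul_kronecker (s : Finset ι) (a : ι → R) (A : ι → Matrix l m R)
    (B : Matrix n p R) :
    (∑ i ∈ s, a i • A i) ⊗ₖ B = ∑ i ∈ s, a i • (A i ⊗ₖ B) := by
  ext ⟨i, x⟩ ⟨j, y⟩
  simp [Matrix.sum_apply, Finset.sum_mul, mul_assoc]

lemma kronecker_transpose_mul_one_kronecker_mul [Fintype l] [Fintype n] [DecidableEq l]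
    (A : Matrix l m R) (B : Matrix n p R) (Q : Matrix n n R) :
    (A ⊗ₖ B)ᵀ * ((1 : Matrix l l R) ⊗ₖ Q) * (A ⊗ₖ B) = (Aᵀ * A) ⊗ₖ (Bᵀ * Q * B) := by
  rw [← kroneckerMap_transpose, ← mul_kronecker_mul, ← mul_kronecker_mul, Matrix.mul_one]

lemma add_sum_smul_transpose_mul_mul [Fintype m] (s : Finset ι) (M : Matrix m n R)
    (C : Matrix m m R) (K : ι → Matrix m n R) (c : ι → R) :
    (M + ∑ e ∈ s, c e • K e)ᵀ * C * (M + ∑ e ∈ s, c e • K e) =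
      Mᵀ * C * M + ∑ e ∈ s, c e • (Mᵀ * C * K e + (K e)ᵀ * C * M) +
        ∑ e ∈ s, ∑ f ∈ s, (c e * c f) • ((K e)ᵀ * C * K f) := by
  simp only [transpose_add, transpose_sum, transpose_smul, Matrix.add_mul, Matrix.mul_add,
    Matrix.sum_mul, Matrix.mul_sum, Matrix.smul_mul, Matrix.mul_smul, Finset.smul_sum, smul_smul,
    smul_add, Finset.sum_add_distrib]
  have hswap : ∀ e f, (c f * c e) • ((K e)ᵀ * C * K f) = (c e * c f) • ((K e)ᵀ * C * K f) :=
    fun e f => by rw [mul_comm]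
  rw [Finset.sum_comm]
  simp only [hswap]
  abel

end MatrixAlgebra

section EdgeLaplacian

variable {V : Type*} [DecidableEq V]

lemma edgeLaplacian_mk {u v : V} (huv : u ≠ v) :
    edgeLaplacian s(u, v) =
      vecMulVec (Pi.single u 1 - Pi.single v 1) (Pi.single u 1 - Pi.single v 1) := by
  ext i j
  simp only [edgeLaplacian, of_apply, vecMulVec_apply, Pi.sub_apply, Pi.single_apply,
    Sym2.mem_iff, Sym2.mk_isDiag_iff, Sym2.eq_iff]
  by_cases h1 : i = u <;> by_cases h2 : i = v <;> by_cases h3 : j = u <;> by_cases h4 : j = v <;>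
    simp_all [eq_comm]

lemma edgeLaplacian_transpose_mul_self [Fintype V] {e : Sym2 V} (he : ¬e.IsDiag) :
    (edgeLaplacian e)ᵀ * edgeLaplacian e = (2 : ℝ) • edgeLaplacian e := by
  induction e using Sym2.ind with
  | _ u v =>
    have huv : u ≠ v := by simpa using he
    have hnorm :
        (Pi.single u 1 - Pi.single v 1 : V → ℝ) ⬝ᵥ (Pi.single u 1 - Pi.single v 1) = 2 := by
      simp [dotProduct_sub, huv, huv.symm]
      norm_num
    rw [edgeLaplacian_mk huv, transpose_vecMulVec, vecMulVec_mul_vecMulVec, hnorm, vecMulVec_smul]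

lemma lapMatrix_eq_sum_edgeLaplacian [Fintype V] (G : SimpleGraph V) [DecidableRel G.Adj] :
    G.lapMatrix ℝ = ∑ e ∈ G.edgeFinset, edgeLaplacian e := by
  ext i j
  simp only [Matrix.sum_apply, edgeLaplacian, of_apply, SimpleGraph.lapMatrix, Matrix.sub_apply,
    SimpleGraph.degMatrix, diagonal_apply, SimpleGraph.adjMatrix_apply]
  by_cases h : i = j
  · subst h
    have hloopless : ∀ e ∈ G.edgeFinset, ¬e.IsDiag := fun e he =>
      G.not_isDiag_of_mem_edgeSet (SimpleGraph.mem_edgeFinset.mp he)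
    simp only [if_true, G.irrefl, if_false, sub_zero]
    rw [Finset.sum_congr rfl (g := fun e => if i ∈ e then (1 : ℝ) else 0) fun e he => by
        simp [hloopless e he],
      Finset.sum_boole, ← SimpleGraph.incidenceFinset_eq_filter,
      SimpleGraph.card_incidenceFinset_eq_degree]
  · simp only [if_neg h, zero_sub, eq_comm (a := s(i, j)), Finset.sum_ite_eq']
    by_cases hadj : G.Adj i j <;> simp [hadj]

end EdgeLaplacian

section Moments

variable {Ω ι : Type*} [MeasurableSpace Ω] {μ : Measure Ω}

lemma integrable_of_forall_eq_zero_or_one [IsFiniteMeasure μ] {f : Ω → ℝ} (hf : Measurable f)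
    (h01 : ∀ ω, f ω = 0 ∨ f ω = 1) : Integrable f μ :=
  (integrable_const (1 : ℝ)).mono' hf.aestronglyMeasurable <|
    Filter.Eventually.of_forall fun ω => by rcases h01 ω with h | h <;> simp [h]

lemma integral_of_forall_eq_zero_or_one {f : Ω → ℝ} (hf : Measurable f)
    (h01 : ∀ ω, f ω = 0 ∨ f ω = 1) {p : ℝ} (hp : 0 ≤ p)
    (hμ : μ {ω | f ω = 1} = ENNReal.ofReal p) : ∫ ω, f ω ∂μ = p := by
  have hf_eq : f = {ω | f ω = 1}.indicator 1 := by
    funext ω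
    rcases h01 ω with h | h <;> simp [h]
  conv_lhs => rw [hf_eq]
  rw [integral_indicator_one (s := {ω | f ω = 1}) (hf (measurableSet_singleton 1)),
    measureReal_def, hμ, ENNReal.toReal_ofReal hp]

lemma integral_mul_of_iIndepFun_of_eq_zero_or_one [IsProbabilityMeasure μ] [DecidableEq ι]
    {a : ι → Ω → ℝ} (hmeas : ∀ e, Measurable (a e)) (h01 : ∀ e ω, a e ω = 0 ∨ a e ω = 1)
    {p : ℝ} (hp : 0 ≤ p) (hbern : ∀ e, μ {ω | a e ω = 1} = ENNReal.ofReal p)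
    (hindep : iIndepFun a μ) (e f : ι) :
    ∫ ω, a e ω * a f ω ∂μ = p * p + if e = f then p - p * p else 0 := by
  have hmean : ∀ e, ∫ ω, a e ω ∂μ = p := fun e =>
    integral_of_forall_eq_zero_or_one (hmeas e) (h01 e) hp (hbern e)
  by_cases hef : e = f
  · subst hef
    have hidem : ∀ ω, a e ω * a e ω = a e ω := fun ω => by rcases h01 e ω with h | h <;> simp [h]
    simp only [hidem, hmean, if_true]
    ring
  · have := (hindep.indepFun hef).integral_mul_eq_mul_integral (hmeas e).aestronglyMeasurable
      (hmeas f).aestronglyMeasurable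
    simp only [Pi.mul_apply, hmean] at this
    rw [this, if_neg hef, add_zero]

variable [IsProbabilityMeasure μ]

lemma integral_add_sum_mul_add_sum_sum_mul (s : Finset ι) {a : ι → Ω → ℝ}
    (ha : ∀ e ∈ s, Integrable (a e) μ)
    (haa : ∀ e ∈ s, ∀ f ∈ s, Integrable (fun ω => a e ω * a f ω) μ)
    (c : ℝ) (d : ι → ℝ) (q : ι → ι → ℝ) :
    ∫ ω, (c + ∑ e ∈ s, a e ω * d e + ∑ e ∈ s, ∑ f ∈ s, a e ω * a f ω * q e f) ∂μ =
      c + ∑ e ∈ s, (∫ ω, a e ω ∂μ) * d e +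
        ∑ e ∈ s, ∑ f ∈ s, (∫ ω, a e ω * a f ω ∂μ) * q e f := by
  have hlin e (he : e ∈ s) : Integrable (fun ω => a e ω * d e) μ := (ha e he).mul_const _
  have hquad e (he : e ∈ s) f (hf : f ∈ s) : Integrable (fun ω => a e ω * a f ω * q e f) μ :=
    (haa e he f hf).mul_const _
  have hquad' e (he : e ∈ s) : Integrable (fun ω => ∑ f ∈ s, a e ω * a f ω * q e f) μ :=
    integrable_finsetSum _ (hquad e he)
  rw [integral_add (by exact (integrable_const c).add (integrable_finsetSum _ hlin))
      (by exact integrable_finsetSum _ hquad'), integral_add (integrable_const c)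
      (by exact integrable_finsetSum _ hlin), integral_const, probReal_univ, one_smul,
    integral_finsetSum _ hlin, integral_finsetSum _ hquad']
  congr 1
  · congr 1
    exact Finset.sum_congr rfl fun e _ => integral_mul_const _ _
  · refine Finset.sum_congr rfl fun e he => ?_
    rw [integral_finsetSum _ (hquad e he)]
    exact Finset.sum_congr rfl fun f _ => integral_mul_const _ _

theorem integral_quadratic_form_of_moments [DecidableEq ι] {β γ : Type*} [Fintype β]
    (s : Finset ι) {a : ι → Ω → ℝ} (ha : ∀ e ∈ s, Integrable (a e) μ)
    (haa : ∀ e ∈ s, ∀ f ∈ s, Integrable (fun ω => a e ω * a f ω) μ) {p v : ℝ}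
    (hmean : ∀ e ∈ s, ∫ ω, a e ω ∂μ = p)
    (hmoment : ∀ e ∈ s, ∀ f ∈ s, ∫ ω, a e ω * a f ω ∂μ = p * p + if e = f then v else 0)
    (M : Matrix β γ ℝ) (C : Matrix β β ℝ) (K : ι → Matrix β γ ℝ) :
    (of fun i j => ∫ ω, ((M + ∑ e ∈ s, a e ω • K e)ᵀ * C * (M + ∑ e ∈ s, a e ω • K e)) i j ∂μ) =
      (M + ∑ e ∈ s, p • K e)ᵀ * C * (M + ∑ e ∈ s, p • K e) + v • ∑ e ∈ s, (K e)ᵀ * C * K e := by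
  have hentry : (of fun i j =>
      ∫ ω, ((M + ∑ e ∈ s, a e ω • K e)ᵀ * C * (M + ∑ e ∈ s, a e ω • K e)) i j ∂μ) =
        Mᵀ * C * M + ∑ e ∈ s, p • (Mᵀ * C * K e + (K e)ᵀ * C * M) +
          ∑ e ∈ s, ∑ f ∈ s, (p * p + if e = f then v else 0) • ((K e)ᵀ * C * K f) := by
    ext i j
    simp only [of_apply, add_sum_smul_transpose_mul_mul, Matrix.add_apply, Matrix.sum_apply,
      Matrix.smul_apply, smul_eq_mul]
    rw [integral_add_sum_mul_add_sum_sum_mul s ha haa]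
    congr 1
    · congr 1
      exact Finset.sum_congr rfl fun e he => by rw [hmean e he]
    · exact Finset.sum_congr rfl fun e he => Finset.sum_congr rfl fun f hf => by
        rw [hmoment e he f hf]
  rw [hentry, add_sum_smul_transpose_mul_mul]
  simp only [add_smul, ite_smul, zero_smul, Finset.sum_add_distrib, Finset.sum_ite_eq,
    Finset.sum_ite_mem, Finset.inter_self, Finset.smul_sum]
  abel

end Moments

theorem integral_kronecker_quadratic_form_general
    {V : Type*} [Fintype V] [DecidableEq V]
    (G : SimpleGraph V) [DecidableRel G.Adj]
    {Ω : Type*} [MeasurableSpace Ω] (μ : Measure Ω) [IsProbabilityMeasure μ]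
    (p : ℝ) (hp : p ∈ Set.Icc (0 : ℝ) 1)
    (α : Sym2 V → Ω → ℝ)
    (hmeas : ∀ e, Measurable (α e))
    (h01 : ∀ e ∈ G.edgeSet, ∀ ω, α e ω = 0 ∨ α e ω = 1)
    (hbern : ∀ e ∈ G.edgeSet, μ {ω | α e ω = 1} = ENNReal.ofReal p)
    (hindep : iIndepFun (fun e : G.edgeSet => α e.1) μ)
    {n m : ℕ} (Q : Matrix (Fin n) (Fin n) ℝ)
    (Bd Bc Bp : Matrix (Fin n) (Fin m) ℝ) :
    (Matrix.of fun i j =>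
        ∫ ω,
          (((1 : Matrix V V ℝ) ⊗ₖ Bd +
              (∑ e ∈ G.edgeFinset, α e ω • edgeLaplacian e) ⊗ₖ Bc +
              G.lapMatrix ℝ ⊗ₖ Bp)ᵀ *
            ((1 : Matrix V V ℝ) ⊗ₖ Q) *
            ((1 : Matrix V V ℝ) ⊗ₖ Bd +
              (∑ e ∈ G.edgeFinset, α e ω • edgeLaplacian e) ⊗ₖ Bc +
              G.lapMatrix ℝ ⊗ₖ Bp)) i j ∂μ) =
      ((1 : Matrix V V ℝ) ⊗ₖ Bd + G.lapMatrix ℝ ⊗ₖ (p • Bc + Bp))ᵀ *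
          ((1 : Matrix V V ℝ) ⊗ₖ Q) *
          ((1 : Matrix V V ℝ) ⊗ₖ Bd + G.lapMatrix ℝ ⊗ₖ (p • Bc + Bp)) +
        (2 * p * (1 - p)) • (G.lapMatrix ℝ ⊗ₖ (Bcᵀ * Q * Bc)) := by
  have hedge e (he : e ∈ G.edgeFinset) : e ∈ G.edgeSet := SimpleGraph.mem_edgeFinset.mp he
  have hint e (he : e ∈ G.edgeFinset) : Integrable (α e) μ :=
    integrable_of_forall_eq_zero_or_one (hmeas e) (h01 e (hedge e he))
  have hint₂ e (he : e ∈ G.edgeFinset) f (hf : f ∈ G.edgeFinset) :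
      Integrable (fun ω => α e ω * α f ω) μ :=
    integrable_of_forall_eq_zero_or_one ((hmeas e).mul (hmeas f)) fun ω => by
      rcases h01 e (hedge e he) ω with h | h <;> rcases h01 f (hedge f hf) ω with h' | h' <;>
        simp [h, h']
  have hmean e (he : e ∈ G.edgeFinset) : ∫ ω, α e ω ∂μ = p :=
    integral_of_forall_eq_zero_or_one (hmeas e) (h01 e (hedge e he)) hp.1 (hbern e (hedge e he))
  have hmoment e (he : e ∈ G.edgeFinset) f (hf : f ∈ G.edgeFinset) :
      ∫ ω, α e ω * α f ω ∂μ = p * p + if e = f then p - p * p else 0 := by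
    simpa using integral_mul_of_iIndepFun_of_eq_zero_or_one (a := fun e : G.edgeSet => α e.1)
      (fun e => hmeas e) (fun e => h01 e e.2) hp.1 (fun e => hbern e e.2) hindep
      ⟨e, hedge e he⟩ ⟨f, hedge f hf⟩
  set M := (1 : Matrix V V ℝ) ⊗ₖ Bd + G.lapMatrix ℝ ⊗ₖ Bp
  set K : Sym2 V → Matrix (V × Fin n) (V × Fin m) ℝ := fun e => edgeLaplacian e ⊗ₖ Bc
  have hrandom ω : (1 : Matrix V V ℝ) ⊗ₖ Bd +
      (∑ e ∈ G.edgeFinset, α e ω • edgeLaplacian e) ⊗ₖ Bc + G.lapMatrix ℝ ⊗ₖ Bp =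
        M + ∑ e ∈ G.edgeFinset, α e ω • K e := by
    rw [sum_smul_kronecker, add_right_comm]
  have hexpected : (1 : Matrix V V ℝ) ⊗ₖ Bd + G.lapMatrix ℝ ⊗ₖ (p • Bc + Bp) =
      M + ∑ e ∈ G.edgeFinset, p • K e := by
    rw [← sum_smul_kronecker, ← Finset.smul_sum, ← lapMatrix_eq_sum_edgeLaplacian, kronecker_add,
      smul_kronecker, kronecker_smul, add_comm (p • _), ← add_assoc]
  have hvariance : ∑ e ∈ G.edgeFinset, (K e)ᵀ * ((1 : Matrix V V ℝ) ⊗ₖ Q) * K e =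
      (2 : ℝ) • (G.lapMatrix ℝ ⊗ₖ (Bcᵀ * Q * Bc)) := by
    rw [Finset.sum_congr rfl fun e he => by
        rw [kronecker_transpose_mul_one_kronecker_mul,
          edgeLaplacian_transpose_mul_self (G.not_isDiag_of_mem_edgeSet (hedge e he)),
          smul_kronecker],
      ← sum_smul_kronecker, ← Finset.smul_sum, ← lapMatrix_eq_sum_edgeLaplacian, smul_kronecker]
  simp_rw [hrandom]
  rw [integral_quadratic_form_of_moments G.edgeFinset hint hint₂ hmean hmoment, hexpected,
    hvariance, smul_smul]
  congr 2
  ring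

/-- Let `G` be a finite undirected simple graph with Laplacian `L`, and let
`(α_e)` be mutually independent Bernoulli(`p`) `{0,1}`-random variables indexed by the edges of
`G`, yielding the random Laplacian `L̃ = Σ_{e ∈ E(G)} α_e • L_e`.  For a symmetric `Q` and
matrices `B^d, B^c, B^p`, the entrywise expectation of
`(I ⊗ B^d + L̃ ⊗ B^c + L ⊗ B^p)ᵀ (I ⊗ Q) (I ⊗ B^d + L̃ ⊗ B^c + L ⊗ B^p)` equals
`(I ⊗ B^d + L ⊗ (p B^c + B^p))ᵀ (I ⊗ Q) (I ⊗ B^d + L ⊗ (p B^c + B^p))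
  + 2p(1-p) • L ⊗ (B^{cᵀ} Q B^c)`. -/
theorem integral_kronecker_quadratic_form
    {V : Type*} [Fintype V] [DecidableEq V]
    (G : SimpleGraph V) [DecidableRel G.Adj]
    {Ω : Type*} [MeasurableSpace Ω] (μ : Measure Ω) [IsProbabilityMeasure μ]
    (p : ℝ) (hp : p ∈ Set.Icc (0 : ℝ) 1)
    (α : Sym2 V → Ω → ℝ)
    (hmeas : ∀ e, Measurable (α e))
    (h01 : ∀ e ∈ G.edgeSet, ∀ ω, α e ω = 0 ∨ α e ω = 1)
    (hbern : ∀ e ∈ G.edgeSet, μ {ω | α e ω = 1} = ENNReal.ofReal p)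
    (hindep : iIndepFun (fun e : G.edgeSet => α e.1) μ)
    {n m : ℕ} (Q : Matrix (Fin n) (Fin n) ℝ) (hQsymm : Q.IsSymm)
    (Bd Bc Bp : Matrix (Fin n) (Fin m) ℝ) :
    (Matrix.of fun i j =>
        ∫ ω,
          (((1 : Matrix V V ℝ) ⊗ₖ Bd +
              (∑ e ∈ G.edgeFinset, α e ω • edgeLaplacian e) ⊗ₖ Bc +
              G.lapMatrix ℝ ⊗ₖ Bp)ᵀ *
            ((1 : Matrix V V ℝ) ⊗ₖ Q) *
            ((1 : Matrix V V ℝ) ⊗ₖ Bd +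
              (∑ e ∈ G.edgeFinset, α e ω • edgeLaplacian e) ⊗ₖ Bc +
              G.lapMatrix ℝ ⊗ₖ Bp)) i j ∂μ) =
      ((1 : Matrix V V ℝ) ⊗ₖ Bd + G.lapMatrix ℝ ⊗ₖ (p • Bc + Bp))ᵀ *
          ((1 : Matrix V V ℝ) ⊗ₖ Q) *
          ((1 : Matrix V V ℝ) ⊗ₖ Bd + G.lapMatrix ℝ ⊗ₖ (p • Bc + Bp)) +
        (2 * p * (1 - p)) • (G.lapMatrix ℝ ⊗ₖ (Bcᵀ * Q * Bc)) :=
  integral_kronecker_quadratic_form_general G μ p hp α hmeas h01 hbern hindep Q Bd Bc Bp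
end

section
/- Consider a switched Markov jump linear system with finite mode sets K and K̃, matrices A_{i,j} ∈ ℝ^{n×n}, C_{i,j} ∈ ℝ^{q×n} for i ∈ K̃, j ∈ K, and probabilities t_i^j ≥ 0 with Σ_{i∈K̃} t_i^j = 1 for each j ∈ K. Suppose there exists a symmetric positive definite matrix Q such that for every j ∈ K, Σ_{i∈K̃} t_i^j (A_{i,j}ᵀ Q A_{i,j} + C_{i,j}ᵀ C_{i,j}) ≺ Q. Then the system is mean-square stable: for every deterministic switching sequence ν : ℕ → K, every sequence (σ_k)_{k∈ℕ} of mutually independent K̃-valued random variables with ℙ(σ_k = i) = t_i^{ν_k}, and every initial state ξ₀ ∈ ℝⁿ, the state process defined by ξ_{k+1} = A_{σ_k, ν_k} ξ_k satisfies lim_{k→∞} E[‖ξ_k‖²] = 0. -/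
open MeasureTheory ProbabilityTheory Matrix

/-!
Write `V x = xᵀ Q x`. Since `Q` is positive definite, `V` is comparable to `‖x‖²`, and the LMI
makes the one-step averaged Lyapunov map `x ↦ ∑ᵢ tᵢʲ V (A_{i,j} x)` a strict contraction of `V`:
there is `ρ < 1` with `∑ᵢ tᵢʲ V (A_{i,j} x) ≤ ρ V x` for every `x` and every `j ∈ K`. The state
`ξ_k` is a deterministic function of the history `(σ₀, …, σ_{k-1})`, whose law is the product of
the laws of the `σ_m` by independence; averaging over the last mode of the history gives
`E[V ξ_{k+1}] ≤ ρ E[V ξ_k]`, hence `E[‖ξ_k‖²] ≤ C ρᵏ → 0`.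
-/

namespace Matrix

open scoped MatrixOrder

variable {ι : Type*} [Fintype ι]

lemma dotProduct_mulVec_le_of_le {M N : Matrix ι ι ℝ} (h : M ≤ N) (v : ι → ℝ) :
    v ⬝ᵥ M *ᵥ v ≤ v ⬝ᵥ N *ᵥ v := by
  have := (le_iff.1 h).dotProduct_mulVec_nonneg v
  rw [star_trivial, sub_mulVec, dotProduct_sub] at this
  linarith

lemma dotProduct_algebraMap_mulVec [DecidableEq ι] (r : ℝ) (v : ι → ℝ) :
    v ⬝ᵥ algebraMap ℝ (Matrix ι ι ℝ) r *ᵥ v = r * (v ⬝ᵥ v) := by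
  rw [Algebra.algebraMap_eq_smul_one, smul_mulVec, one_mulVec, dotProduct_smul, smul_eq_mul]

lemma dotProduct_transpose_mul_mul_mulVec {κ : Type*} [Fintype κ] (B : Matrix κ ι ℝ)
    (X : Matrix κ κ ℝ) (v : ι → ℝ) :
    v ⬝ᵥ (Bᵀ * X * B) *ᵥ v = B *ᵥ v ⬝ᵥ X *ᵥ (B *ᵥ v) := by
  rw [← mulVec_mulVec, ← mulVec_mulVec, dotProduct_mulVec, vecMul_transpose]

lemma dotProduct_transpose_mul_mulVec {κ : Type*} [Fintype κ] (B : Matrix κ ι ℝ) (v : ι → ℝ) :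
    v ⬝ᵥ (Bᵀ * B) *ᵥ v = B *ᵥ v ⬝ᵥ B *ᵥ v := by
  rw [← mulVec_mulVec, dotProduct_mulVec, vecMul_transpose]

lemma PosDef.exists_pos_mul_dotProduct_self_le {M : Matrix ι ι ℝ} (hM : M.PosDef) :
    ∃ ε > 0, ∀ v, ε * (v ⬝ᵥ v) ≤ v ⬝ᵥ M *ᵥ v := by
  classical
  obtain ⟨ε, hε, hεM⟩ : ∃ ε > 0, algebraMap ℝ (Matrix ι ι ℝ) ε ≤ M := by
    rcases subsingleton_or_nontrivial (Matrix ι ι ℝ) with _ | _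
    · exact ⟨1, one_pos, (Subsingleton.elim _ _).le⟩
    exact (CFC.exists_pos_algebraMap_le_iff hM.isHermitian.isSelfAdjoint).2 fun _ hx =>
      hM.isStrictlyPositive.spectrum_pos hx
  exact ⟨ε, hε, fun v => dotProduct_algebraMap_mulVec ε v ▸ dotProduct_mulVec_le_of_le hεM v⟩

lemma IsHermitian.exists_dotProduct_mulVec_le_mul {M : Matrix ι ι ℝ} (hM : M.IsHermitian) :
    ∃ Λ, ∀ v, v ⬝ᵥ M *ᵥ v ≤ Λ * (v ⬝ᵥ v) := by
  classical
  obtain ⟨Λ, hΛ⟩ := (ContinuousFunctionalCalculus.isCompact_spectrum (R := ℝ) M).bddAbove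
  exact ⟨Λ, fun v => dotProduct_algebraMap_mulVec Λ v ▸
    dotProduct_mulVec_le_of_le (le_algebraMap_of_spectrum_le hΛ hM.isSelfAdjoint) v⟩

/-- With `ε • 1 ≤ M - N` and `M ≤ L • 1`, one can take `ρ = 1 - ε / L`. -/
lemma PosDef.exists_dotProduct_mulVec_le_mul_of_posDef_sub {M N : Matrix ι ι ℝ}
    (hM : M.PosDef) (hMN : (M - N).PosDef) :
    ∃ ρ ∈ Set.Ico (0 : ℝ) 1, ∀ v, v ⬝ᵥ N *ᵥ v ≤ ρ * (v ⬝ᵥ M *ᵥ v) := by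
  obtain ⟨ε, hε, hεMN⟩ := hMN.exists_pos_mul_dotProduct_self_le
  obtain ⟨Λ, hΛM⟩ := hM.isHermitian.exists_dotProduct_mulVec_le_mul
  set L := max Λ ε
  have hL : 0 < L := hε.trans_le (le_max_right _ _)
  refine ⟨1 - ε / L, ⟨sub_nonneg.2 <| (div_le_one hL).2 <| le_max_right _ _,
    sub_lt_self _ <| div_pos hε hL⟩, fun v => ?_⟩
  have hMv : v ⬝ᵥ M *ᵥ v ≤ L * (v ⬝ᵥ v) :=
    (hΛM v).trans (mul_le_mul_of_nonneg_right (le_max_left _ _) (dotProduct_self_star_nonneg v))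
  have hMNv : ε / L * (v ⬝ᵥ M *ᵥ v) ≤ v ⬝ᵥ (M - N) *ᵥ v := calc
    ε / L * (v ⬝ᵥ M *ᵥ v) ≤ ε / L * (L * (v ⬝ᵥ v)) := by gcongr
    _ = ε * (v ⬝ᵥ v) := by field_simp
    _ ≤ v ⬝ᵥ (M - N) *ᵥ v := hεMN v
  rw [sub_mulVec, dotProduct_sub] at hMNv
  linarith

end Matrix

lemma Finite.exists_mem_forall_le {α β : Type*} [Finite α] [LinearOrder β] {s : Set β}
    (hs : s.Nonempty) {f : α → β} (hf : ∀ a, f a ∈ s) : ∃ b ∈ s, ∀ a, f a ≤ b := by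
  cases isEmpty_or_nonempty α
  · obtain ⟨b, hb⟩ := hs
    exact ⟨b, hb, isEmptyElim⟩
  · obtain ⟨a₀, ha₀⟩ := Finite.exists_max f
    exact ⟨f a₀, hf a₀, ha₀⟩

section Trajectory

variable {X S : Type*}

def trajectory (f : ℕ → S → X → X) (x₀ : X) : (k : ℕ) → (Fin k → S) → X
  | 0, _ => x₀
  | k + 1, h => f k (h (Fin.last k)) (trajectory f x₀ k (Fin.init h))

@[simp]
lemma trajectory_snoc (f : ℕ → S → X → X) (x₀ : X) {k : ℕ} (h : Fin k → S) (i : S) :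
    trajectory f x₀ (k + 1) (Fin.snoc h i) = f k i (trajectory f x₀ k h) := by
  simp [trajectory]

lemma eq_trajectory_of_succ {Ω : Type*} {σ : ℕ → Ω → S} {f : ℕ → S → X → X} {x₀ : X}
    {ξ : ℕ → Ω → X} (hinit : ∀ ω, ξ 0 ω = x₀) (hrec : ∀ k ω, ξ (k + 1) ω = f k (σ k ω) (ξ k ω))
    (k : ℕ) (ω : Ω) : ξ k ω = trajectory f x₀ k (fun m => σ m ω) := by
  induction k with
  | zero => exact hinit ω
  | succ k ih => rw [hrec, ih]; rfl

lemma sum_prod_mul_eq_sum_snoc [Fintype S] (p : ℕ → S → ℝ) {k : ℕ}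
    (F : (Fin (k + 1) → S) → ℝ) :
    ∑ h, (∏ m : Fin (k + 1), p m (h m)) * F h
      = ∑ h : Fin k → S, (∏ m : Fin k, p m (h m)) * ∑ i, p k i * F (Fin.snoc h i) := by
  rw [← (Fin.snocEquiv fun _ => S).sum_comp, Fintype.sum_prod_type_right]
  refine Finset.sum_congr rfl fun h _ => ?_
  simp only [Fin.snocEquiv_apply, Fin.prod_univ_castSucc, Fin.val_castSucc, Fin.snoc_castSucc,
    Fin.val_last, Fin.snoc_last, mul_assoc, mul_left_comm, Finset.mul_sum]
  rfl

end Trajectory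

namespace ProbabilityTheory

variable {Ω S : Type*} [MeasurableSpace Ω] {μ : Measure Ω} [MeasurableSpace S]
  [MeasurableSingletonClass S] {σ : ℕ → Ω → S} {p : ℕ → S → ℝ}

lemma iIndepFun.measureReal_history_eq_prod (hσ : iIndepFun σ μ)
    (hp : ∀ k i, μ {ω | σ k ω = i} = ENNReal.ofReal (p k i)) (hp0 : ∀ k i, 0 ≤ p k i)
    {k : ℕ} (h : Fin k → S) :
    μ.real ((fun ω (m : Fin k) => σ m ω) ⁻¹' {h}) = ∏ m : Fin k, p m (h m) := by
  have hinter := (hσ.precomp Fin.val_injective).measure_inter_preimage_eq_mul Finset.univ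
    (sets := fun m => {h m}) fun _ _ => measurableSet_singleton _
  have hpre : (fun ω (m : Fin k) => σ m ω) ⁻¹' {h}
      = ⋂ m ∈ (Finset.univ : Finset (Fin k)), σ m ⁻¹' {h m} := by
    ext ω; simp [funext_iff]
  rw [measureReal_def, hpre, hinter, ENNReal.toReal_prod]
  exact Finset.prod_congr rfl fun m _ => by
    rw [← ENNReal.toReal_ofReal (hp0 m (h m)), ← hp]; rfl

variable [Fintype S] [IsFiniteMeasure μ]

lemma integrable_comp_history (hmeas : ∀ k, Measurable (σ k)) {k : ℕ} (F : (Fin k → S) → ℝ) :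
    Integrable (fun ω => F (fun m => σ m ω)) μ := by
  have hH : Measurable fun ω (m : Fin k) => σ m ω := measurable_pi_lambda _ fun m => hmeas m
  exact (integrable_map_measure Measurable.of_discrete.aestronglyMeasurable hH.aemeasurable).1
    Integrable.of_finite

lemma iIndepFun.integral_comp_history (hmeas : ∀ k, Measurable (σ k)) (hσ : iIndepFun σ μ)
    (hp : ∀ k i, μ {ω | σ k ω = i} = ENNReal.ofReal (p k i)) (hp0 : ∀ k i, 0 ≤ p k i)
    {k : ℕ} (F : (Fin k → S) → ℝ) :
    ∫ ω, F (fun m => σ m ω) ∂μ = ∑ h, (∏ m : Fin k, p m (h m)) * F h := by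
  have hH : Measurable fun ω (m : Fin k) => σ m ω := measurable_pi_lambda _ fun m => hmeas m
  rw [← integral_map hH.aemeasurable Measurable.of_discrete.aestronglyMeasurable,
    integral_fintype Integrable.of_finite]
  refine Finset.sum_congr rfl fun h _ => ?_
  rw [map_measureReal_apply hH (measurableSet_singleton h),
    hσ.measureReal_history_eq_prod hp hp0, smul_eq_mul]

variable {X : Type*} {f : ℕ → S → X → X} {x₀ : X} {ξ : ℕ → Ω → X}

theorem iIndepFun.integral_comp_le_pow_mul (hmeas : ∀ k, Measurable (σ k)) (hσ : iIndepFun σ μ)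
    (hp : ∀ k i, μ {ω | σ k ω = i} = ENNReal.ofReal (p k i)) (hp0 : ∀ k i, 0 ≤ p k i)
    (hinit : ∀ ω, ξ 0 ω = x₀) (hrec : ∀ k ω, ξ (k + 1) ω = f k (σ k ω) (ξ k ω))
    {V : X → ℝ} {ρ : ℝ} (hρ : 0 ≤ ρ) (hV : ∀ k x, ∑ i, p k i * V (f k i x) ≤ ρ * V x) (k : ℕ) :
    ∫ ω, V (ξ k ω) ∂μ ≤ ρ ^ k * V x₀ := by
  simp_rw [eq_trajectory_of_succ hinit hrec]
  refine (hσ.integral_comp_history hmeas hp hp0 fun h => V (trajectory f x₀ k h)).trans_le ?_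
  induction k with
  | zero => simp [trajectory]
  | succ k ih =>
    have hw (h : Fin k → S) : 0 ≤ ∏ m : Fin k, p m (h m) := Finset.prod_nonneg fun _ _ => hp0 _ _
    calc ∑ h, (∏ m : Fin (k + 1), p m (h m)) * V (trajectory f x₀ (k + 1) h)
        = ∑ h : Fin k → S, (∏ m : Fin k, p m (h m))
            * ∑ i, p k i * V (f k i (trajectory f x₀ k h)) := by
          simp only [sum_prod_mul_eq_sum_snoc, trajectory_snoc]
      _ ≤ ∑ h : Fin k → S, (∏ m : Fin k, p m (h m)) * (ρ * V (trajectory f x₀ k h)) :=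
          Finset.sum_le_sum fun h _ => mul_le_mul_of_nonneg_left (hV _ _) (hw h)
      _ = ρ * ∑ h : Fin k → S, (∏ m : Fin k, p m (h m)) * V (trajectory f x₀ k h) := by
          rw [Finset.mul_sum]; exact Finset.sum_congr rfl fun _ _ => mul_left_comm _ _ _
      _ ≤ ρ * (ρ ^ k * V x₀) := mul_le_mul_of_nonneg_left ih hρ
      _ = ρ ^ (k + 1) * V x₀ := by ring

lemma integrable_comp_of_succ (hmeas : ∀ k, Measurable (σ k)) (hinit : ∀ ω, ξ 0 ω = x₀)
    (hrec : ∀ k ω, ξ (k + 1) ω = f k (σ k ω) (ξ k ω)) (G : X → ℝ) (k : ℕ) :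
    Integrable (fun ω => G (ξ k ω)) μ := by
  simp_rw [eq_trajectory_of_succ hinit hrec]
  exact integrable_comp_history hmeas fun h => G (trajectory f x₀ k h)

end ProbabilityTheory

lemma exists_sum_mul_dotProduct_le_of_lmi {K S : Type*} [Finite K] [Fintype S] {n q : ℕ}
    {A : S → K → Matrix (Fin n) (Fin n) ℝ} {C : S → K → Matrix (Fin q) (Fin n) ℝ}
    {t : S → K → ℝ} (ht : ∀ i j, 0 ≤ t i j) {Q : Matrix (Fin n) (Fin n) ℝ} (hQ : Q.PosDef)
    (hLMI : ∀ j, (Q - ∑ i, t i j • ((A i j)ᵀ * Q * A i j + (C i j)ᵀ * C i j)).PosDef) :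
    ∃ ρ ∈ Set.Ico (0 : ℝ) 1, ∀ j v,
      ∑ i, t i j * (A i j *ᵥ v ⬝ᵥ Q *ᵥ (A i j *ᵥ v)) ≤ ρ * (v ⬝ᵥ Q *ᵥ v) := by
  choose ρ hρ hρN using fun j => hQ.exists_dotProduct_mulVec_le_mul_of_posDef_sub (hLMI j)
  obtain ⟨r, hr, hρr⟩ := Finite.exists_mem_forall_le ⟨0, by simp⟩ hρ
  refine ⟨r, hr, fun j v => ?_⟩
  have hCv : ∀ i, 0 ≤ C i j *ᵥ v ⬝ᵥ C i j *ᵥ v := fun i => dotProduct_self_star_nonneg _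
  calc ∑ i, t i j * (A i j *ᵥ v ⬝ᵥ Q *ᵥ (A i j *ᵥ v))
      ≤ ∑ i, t i j * (A i j *ᵥ v ⬝ᵥ Q *ᵥ (A i j *ᵥ v) + C i j *ᵥ v ⬝ᵥ C i j *ᵥ v) :=
        Finset.sum_le_sum fun i _ => mul_le_mul_of_nonneg_left (le_add_of_nonneg_right (hCv i))
          (ht i j)
    _ = v ⬝ᵥ (∑ i, t i j • ((A i j)ᵀ * Q * A i j + (C i j)ᵀ * C i j)) *ᵥ v := by
        simp only [sum_mulVec, dotProduct_sum, smul_mulVec, dotProduct_smul, smul_eq_mul,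
          add_mulVec, dotProduct_add, dotProduct_transpose_mul_mul_mulVec,
          dotProduct_transpose_mul_mulVec]
    _ ≤ ρ j * (v ⬝ᵥ Q *ᵥ v) := hρN j v
    _ ≤ r * (v ⬝ᵥ Q *ᵥ v) :=
        mul_le_mul_of_nonneg_right (hρr j) (hQ.posSemidef.dotProduct_mulVec_nonneg v)

theorem switched_mjls_mean_square_stable_general
    {K Ktil : Type*} [Fintype K] [Fintype Ktil]
    [MeasurableSpace Ktil] [MeasurableSingletonClass Ktil]
    {n q : ℕ}
    (A : Ktil → K → Matrix (Fin n) (Fin n) ℝ)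
    (C : Ktil → K → Matrix (Fin q) (Fin n) ℝ)
    (t : Ktil → K → ℝ)
    (ht : ∀ i j, 0 ≤ t i j)
    (Q : Matrix (Fin n) (Fin n) ℝ) (hQ : Q.PosDef)
    (hLMI : ∀ j,
      (Q - ∑ i, t i j • ((A i j)ᵀ * Q * A i j + (C i j)ᵀ * C i j)).PosDef)
    {Ω : Type*} [MeasurableSpace Ω] (μ : Measure Ω) [IsProbabilityMeasure μ]
    (ν : ℕ → K) (σ : ℕ → Ω → Ktil)
    (hσmeas : ∀ k, Measurable (σ k))
    (hσindep : iIndepFun σ μ)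
    (hσdist : ∀ k i, μ {ω | σ k ω = i} = ENNReal.ofReal (t i (ν k)))
    (ξ₀ : Fin n → ℝ) (ξ : ℕ → Ω → Fin n → ℝ)
    (hinit : ∀ ω, ξ 0 ω = ξ₀)
    (hrec : ∀ k ω, ξ (k + 1) ω = (A (σ k ω) (ν k)).mulVec (ξ k ω)) :
    Filter.Tendsto (fun k => ∫ ω, ξ k ω ⬝ᵥ ξ k ω ∂μ) Filter.atTop (nhds 0) := by
  obtain ⟨ρ, ⟨hρ0, hρ1⟩, hρ⟩ := exists_sum_mul_dotProduct_le_of_lmi ht hQ hLMI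
  obtain ⟨ε, hε, hεQ⟩ := hQ.exists_pos_mul_dotProduct_self_le
  have hV : ∀ k, ∫ ω, ξ k ω ⬝ᵥ Q *ᵥ ξ k ω ∂μ ≤ ρ ^ k * (ξ₀ ⬝ᵥ Q *ᵥ ξ₀) :=
    hσindep.integral_comp_le_pow_mul (V := fun x => x ⬝ᵥ Q *ᵥ x) hσmeas hσdist
      (fun k i => ht i (ν k)) hinit hrec hρ0 fun k x => hρ (ν k) x
  have hint : ∀ (G : (Fin n → ℝ) → ℝ) k, Integrable (fun ω => G (ξ k ω)) μ :=
    integrable_comp_of_succ (f := fun k i x => A i (ν k) *ᵥ x) hσmeas hinit hrec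
  have hbound : ∀ k, ∫ ω, ξ k ω ⬝ᵥ ξ k ω ∂μ ≤ ξ₀ ⬝ᵥ Q *ᵥ ξ₀ / ε * ρ ^ k := fun k => calc
    ∫ ω, ξ k ω ⬝ᵥ ξ k ω ∂μ ≤ ∫ ω, ξ k ω ⬝ᵥ Q *ᵥ ξ k ω / ε ∂μ :=
        integral_mono (hint (fun x => x ⬝ᵥ x) k) (hint (fun x => x ⬝ᵥ Q *ᵥ x / ε) k)
          fun ω => (le_div_iff₀' hε).2 (hεQ _)
    _ = (∫ ω, ξ k ω ⬝ᵥ Q *ᵥ ξ k ω ∂μ) / ε := integral_div _ _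
    _ ≤ ρ ^ k * (ξ₀ ⬝ᵥ Q *ᵥ ξ₀) / ε := by gcongr; exact hV k
    _ = ξ₀ ⬝ᵥ Q *ᵥ ξ₀ / ε * ρ ^ k := by ring
  refine squeeze_zero (fun k => integral_nonneg fun ω => dotProduct_self_star_nonneg _) hbound ?_
  simpa using (tendsto_pow_atTop_nhds_zero_of_lt_one hρ0 hρ1).const_mul (ξ₀ ⬝ᵥ Q *ᵥ ξ₀ / ε)

/-- Consider a switched Markov jump linear system with finite mode sets `K`
(deterministic) and `K̃` (stochastic), matrices `A i j`, `C i j` and probabilities `t i j ≥ 0`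
with `Σ_i t i j = 1`.  If there is a symmetric positive definite `Q` with
`Σ_i t i j • (A i jᵀ Q A i j + C i jᵀ C i j) ≺ Q` for every `j`, then the system is mean-square
stable: for every deterministic switching sequence `ν`, every sequence `σ` of mutually
independent `K̃`-valued random variables with `ℙ(σ k = i) = t i (ν k)`, and every initial state,
the state process `ξ_{k+1} = A (σ k) (ν k) ξ_k` satisfies `E[‖ξ_k‖²] → 0`. -/
theorem switched_mjls_mean_square_stable
    {K Ktil : Type*} [Fintype K] [Fintype Ktil] [Nonempty K] [Nonempty Ktil]
    [MeasurableSpace Ktil] [MeasurableSingletonClass Ktil]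
    {n q : ℕ}
    (A : Ktil → K → Matrix (Fin n) (Fin n) ℝ)
    (C : Ktil → K → Matrix (Fin q) (Fin n) ℝ)
    (t : Ktil → K → ℝ)
    (ht : ∀ i j, 0 ≤ t i j) (htsum : ∀ j, ∑ i, t i j = 1)
    (Q : Matrix (Fin n) (Fin n) ℝ) (hQsymm : Q.IsSymm) (hQ : Q.PosDef)
    (hLMI : ∀ j,
      (Q - ∑ i, t i j • ((A i j)ᵀ * Q * A i j + (C i j)ᵀ * C i j)).PosDef)
    {Ω : Type*} [MeasurableSpace Ω] (μ : Measure Ω) [IsProbabilityMeasure μ]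
    (ν : ℕ → K) (σ : ℕ → Ω → Ktil)
    (hσmeas : ∀ k, Measurable (σ k))
    (hσindep : iIndepFun σ μ)
    (hσdist : ∀ k i, μ {ω | σ k ω = i} = ENNReal.ofReal (t i (ν k)))
    (ξ₀ : Fin n → ℝ) (ξ : ℕ → Ω → Fin n → ℝ)
    (hinit : ∀ ω, ξ 0 ω = ξ₀)
    (hrec : ∀ k ω, ξ (k + 1) ω = (A (σ k ω) (ν k)).mulVec (ξ k ω)) :
    Filter.Tendsto (fun k => ∫ ω, ξ k ω ⬝ᵥ ξ k ω ∂μ) Filter.atTop (nhds 0) :=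
  switched_mjls_mean_square_stable_general A C t ht Q hQ hLMI μ ν σ hσmeas hσindep hσdist ξ₀ ξ hinit
    hrec
end
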